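/- The set X³₁ = { Σ_{n=1}^∞ δₙ ∏_{j=1}^n ξⱼ : (δₙ) ∈ W^A_θ, first nonzero digit = 1 }, where ξ₁ = α and ξ_{j+1} = ξⱼ if δⱼ = 0 and ξ_{j+1} = conj(ξⱼ) if δⱼ ≠ 0, satisfies X³₁ = ψ₁(X³₁) ∪ ψ₂(X³₁) for ψ₁(z) = αz and ψ₂(z) = α e^{iθ}·z̄ + α. -/

import Mathlib

open Complex

/-- e^{iθ} -/
noncomputable def rot (θ : ℝ) : ℂ := Complex.exp (θ * Complex.I)

/-- The digit set Δ_θ = {0, 1, e^{iθ}, …, e^{(p-1)iθ}}. -/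
def Delta (θ : ℝ) (p : ℕ) : Set ℂ := insert 0 {z | ∃ k, k < p ∧ z = rot θ ^ k}

open scoped Classical in
/-- N_j : the number of nonzero digits among positions 1,…,j. -/
noncomputable def Ncount (δ : ℕ → ℂ) (j : ℕ) : ℕ :=
  ((Finset.Icc 1 j).filter (fun m => δ m ≠ 0)).card

/-- Alternating Condition: each nonzero digit equals e^{+iθ} times the previous nonzero
digit δ_{j₀} if the count N_{j₀} of nonzero digits up to j₀ is odd, and e^{-iθ} times it
if N_{j₀} is even. Sequences are indexed from 1; index 0 is a dummy (digit 0). -/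
def AC (θ : ℝ) (δ : ℕ → ℂ) : Prop :=
  ∀ j k : ℕ, j < k → δ j ≠ 0 → δ k ≠ 0 → (∀ m, j < m → m < k → δ m = 0) →
    δ k = (if Odd (Ncount δ j) then rot θ else (rot θ)⁻¹) * δ j

/-- Membership in W^A_θ (with the convention δ 0 = 0, i.e. sequences start at index 1). -/
def Walt (θ : ℝ) (p : ℕ) (δ : ℕ → ℂ) : Prop :=
  δ 0 = 0 ∧ (∀ n, δ n ∈ Delta θ p) ∧ AC θ δ

/-- The first nonzero digit of δ is c (or δ is identically zero). -/
def FirstNonzero (δ : ℕ → ℂ) (c : ℂ) : Prop :=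
  (∀ n, δ n = 0) ∨ ∃ j, δ j = c ∧ ∀ m, m < j → δ m = 0

/-- The weights ξ: ξ₁ = α and ξ_{j+1} = ξ_j if δ_j = 0, conj ξ_j otherwise. -/
noncomputable def xi (α : ℂ) (δ : ℕ → ℂ) : ℕ → ℂ
  | 0 => α
  | j + 1 => if δ j = 0 then xi α δ j else starRingEnd ℂ (xi α δ j)

/-- X³₁ : points from alternating sequences with first nonzero digit 1. -/
noncomputable def X3one (α : ℂ) (θ : ℝ) (p : ℕ) : Set ℂ :=
  {x | ∃ δ : ℕ → ℂ, Walt θ p δ ∧ FirstNonzero δ 1 ∧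
    x = ∑' n, δ n * ∏ j ∈ Finset.Icc 1 n, xi α δ j}

/-- X³_{α,θ} : points from all alternating sequences. -/
noncomputable def X3full (α : ℂ) (θ : ℝ) (p : ℕ) : Set ℂ :=
  {x | ∃ δ : ℕ → ℂ, Walt θ p δ ∧
    x = ∑' n, δ n * ∏ j ∈ Finset.Icc 1 n, xi α δ j}


/-!
Read along the nonzero digits, the Alternating Condition with first nonzero digit `1` forces
these digits to be `1, e^{iθ}, 1, e^{iθ}, …`: the `m`-th nonzero digit is `1` for odd `m` and
`e^{iθ}` for even `m`. Dropping a leading zero digit shifts the sequence and multiplies the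
point by `α`. Dropping a leading digit `1` conjugates every later weight and flips the parity
of all later counts; the map `z ↦ e^{iθ} z̄` swaps `1` and `e^{iθ}`, so it turns the remaining
digits back into an admissible sequence. Conjugating the point accordingly gives `ψ₂`.
-/

open ComplexConjugate

lemma norm_rot (θ : ℝ) : ‖rot θ‖ = 1 := by
  simp [rot, Complex.norm_exp]

lemma rot_ne_zero (θ : ℝ) : rot θ ≠ 0 := Complex.exp_ne_zero _

lemma conj_rot (θ : ℝ) : conj (rot θ) = (rot θ)⁻¹ := by
  rw [rot, ← Complex.exp_conj, ← Complex.exp_neg]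
  simp

lemma rot_pow_eq_one {θ : ℝ} {p : ℕ} {q : ℤ} (hp : 0 < p)
    (hθ : θ = 2 * Real.pi * (q : ℝ) / (p : ℝ)) : rot θ ^ p = 1 := by
  have hp' : (p : ℂ) ≠ 0 := by exact_mod_cast hp.ne'
  rw [rot, ← Complex.exp_nat_mul,
    show (p : ℂ) * (θ * Complex.I) = q * (2 * Real.pi * Complex.I) by
      rw [hθ]; push_cast; field_simp]
  exact Complex.exp_int_mul_two_pi_mul_I q

noncomputable def rotConj (θ : ℝ) (z : ℂ) : ℂ := rot θ * conj z

lemma rotConj_eq_zero_iff {θ : ℝ} {z : ℂ} : rotConj θ z = 0 ↔ z = 0 := by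
  simp [rotConj, rot_ne_zero]

lemma rotConj_rotConj (θ : ℝ) (z : ℂ) : rotConj θ (rotConj θ z) = z := by
  rw [rotConj, rotConj, map_mul, conj_conj, conj_rot, ← mul_assoc,
    mul_inv_cancel₀ (rot_ne_zero θ), one_mul]

noncomputable def altDigit (θ : ℝ) (N : ℕ) : ℂ := if Odd N then 1 else rot θ

lemma altDigit_succ (θ : ℝ) (N : ℕ) :
    altDigit θ (N + 1) = (if Odd N then rot θ else (rot θ)⁻¹) * altDigit θ N := by
  by_cases hN : Odd N
  · simp [altDigit, hN, Nat.odd_add_one]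
  · simp [altDigit, hN, Nat.odd_add_one, rot_ne_zero]

lemma rotConj_eq_altDigit_iff {θ : ℝ} {z : ℂ} {N : ℕ} :
    rotConj θ z = altDigit θ N ↔ z = altDigit θ (N + 1) := by
  have hswap : rotConj θ (altDigit θ (N + 1)) = altDigit θ N := by
    by_cases hN : Odd N
    · simp [altDigit, rotConj, hN, Nat.odd_add_one, conj_rot, rot_ne_zero]
    · simp [altDigit, rotConj, hN, Nat.odd_add_one]
  rw [← hswap, (Function.LeftInverse.injective (rotConj_rotConj θ)).eq_iff]

lemma norm_altDigit (θ : ℝ) (N : ℕ) : ‖altDigit θ N‖ = 1 := by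
  unfold altDigit; split_ifs <;> simp [norm_rot]

lemma altDigit_mem_Delta {θ : ℝ} {p : ℕ} {q : ℤ} (hp : 0 < p)
    (hθ : θ = 2 * Real.pi * (q : ℝ) / (p : ℝ)) (N : ℕ) : altDigit θ N ∈ Delta θ p := by
  refine Or.inr ?_
  unfold altDigit
  split_ifs
  · exact ⟨0, hp, (pow_zero _).symm⟩
  · exact ⟨1 % p, Nat.mod_lt _ hp,
      by rw [← pow_eq_pow_mod 1 (rot_pow_eq_one hp hθ), pow_one]⟩

section Ncount

variable {δ δ' : ℕ → ℂ}

lemma Ncount_zero (δ : ℕ → ℂ) : Ncount δ 0 = 0 := by simp [Ncount]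

lemma Ncount_succ (δ : ℕ → ℂ) (j : ℕ) :
    Ncount δ (j + 1) = Ncount δ j + if δ (j + 1) = 0 then 0 else 1 := by
  rw [Ncount, Ncount, ← Finset.insert_Icc_right_eq_Icc_add_one (by omega), Finset.filter_insert]
  by_cases h : δ (j + 1) = 0
  · simp [h]
  · rw [if_pos h, if_neg h, Finset.card_insert_of_notMem (by simp)]

lemma Ncount_tail (δ : ℕ → ℂ) (j : ℕ) :
    Ncount δ (j + 1) = (if δ 1 = 0 then 0 else 1) + Ncount (fun n => δ (n + 1)) j := by
  induction j with
  | zero => rw [Ncount_succ, Ncount_zero, Ncount_zero, zero_add, add_zero]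
  | succ j ih => rw [Ncount_succ, ih, Ncount_succ, add_assoc]

lemma Ncount_congr (h : ∀ n, n ≠ 0 → (δ n = 0 ↔ δ' n = 0)) : Ncount δ = Ncount δ' := by
  funext j
  unfold Ncount
  congr 1
  exact Finset.filter_congr fun n hn =>
    not_congr (h n (Nat.one_le_iff_ne_zero.mp (Finset.mem_Icc.mp hn).1))

lemma Ncount_of_zero_between {j k : ℕ} (hjk : j < k)
    (hgap : ∀ m, j < m → m < k → δ m = 0) :
    Ncount δ k = Ncount δ j + if δ k = 0 then 0 else 1 := by
  induction k, hjk using Nat.le_induction with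
  | base => exact Ncount_succ δ j
  | succ k hjk ih =>
    rw [Ncount_succ, ih fun m hm hmk => hgap m hm (by omega), hgap k hjk (by omega), if_pos rfl,
      add_zero]

lemma Ncount_eq_one_of_first (h0 : δ 0 = 0) {n : ℕ} (hn : δ n ≠ 0)
    (hmin : ∀ m < n, δ m = 0) : Ncount δ n = 1 := by
  have hn0 : 0 < n := Nat.pos_of_ne_zero fun h => hn (h ▸ h0)
  rw [Ncount_of_zero_between hn0 fun m _ hm => hmin m hm, Ncount_zero, if_neg hn]

end Ncount

lemma exists_last_lt {P : ℕ → Prop} :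
    ∀ {n : ℕ}, (∃ m < n, P m) → ∃ j < n, P j ∧ ∀ m, j < m → m < n → ¬ P m
  | 0, ⟨_, hm, _⟩ => absurd hm (Nat.not_lt_zero _)
  | n + 1, hex => by
    by_cases hn : P n
    · exact ⟨n, n.lt_succ_self, hn, fun m h1 h2 => absurd h2 (by omega)⟩
    · obtain ⟨m, hm, hPm⟩ := hex
      have hmn : m < n := lt_of_le_of_ne (Nat.lt_succ_iff.mp hm) fun h => hn (h ▸ hPm)
      obtain ⟨j, hj, hPj, hlast⟩ := exists_last_lt ⟨m, hmn, hPm⟩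
      refine ⟨j, hj.trans n.lt_succ_self, hPj, fun k h1 h2 => ?_⟩
      rcases Nat.lt_succ_iff_lt_or_eq.mp h2 with h2 | rfl
      · exact hlast k h1 h2
      · exact hn

def IsAltFromOne (θ : ℝ) (δ : ℕ → ℂ) : Prop :=
  δ 0 = 0 ∧ ∀ n, δ n ≠ 0 → δ n = altDigit θ (Ncount δ n)

section IsAltFromOne

variable {θ : ℝ} {p : ℕ} {δ : ℕ → ℂ}

lemma IsAltFromOne.eq_one_of_first (h : IsAltFromOne θ δ) {n : ℕ} (hn : δ n ≠ 0)
    (hmin : ∀ m < n, δ m = 0) : δ n = 1 := by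
  rw [h.2 n hn, Ncount_eq_one_of_first h.1 hn hmin]
  simp [altDigit]

lemma IsAltFromOne.norm_le_one (h : IsAltFromOne θ δ) (n : ℕ) : ‖δ n‖ ≤ 1 := by
  by_cases hn : δ n = 0
  · simp [hn]
  · rw [h.2 n hn, norm_altDigit]

lemma IsAltFromOne.walt {q : ℤ} (hp : 0 < p) (hθ : θ = 2 * Real.pi * (q : ℝ) / (p : ℝ))
    (h : IsAltFromOne θ δ) : Walt θ p δ := by
  refine ⟨h.1, fun n => ?_, fun j k hjk hj hk hgap => ?_⟩
  · by_cases hn : δ n = 0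
    · exact Or.inl hn
    · rw [h.2 n hn]
      exact altDigit_mem_Delta hp hθ _
  · rw [h.2 k hk, h.2 j hj, Ncount_of_zero_between hjk hgap, if_neg hk, altDigit_succ]

lemma IsAltFromOne.firstNonzero (h : IsAltFromOne θ δ) : FirstNonzero δ 1 := by
  classical
  by_cases hz : ∃ n, δ n ≠ 0
  · have hmin : ∀ m < Nat.find hz, δ m = 0 := fun m hm => not_not.mp (Nat.find_min hz hm)
    exact Or.inr ⟨Nat.find hz, h.eq_one_of_first (Nat.find_spec hz) hmin, hmin⟩
  · push Not at hz
    exact Or.inl hz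

lemma Walt.isAltFromOne (hW : Walt θ p δ) (hF : FirstNonzero δ 1) : IsAltFromOne θ δ := by
  obtain ⟨h0, -, hAC⟩ := hW
  refine ⟨h0, fun n => ?_⟩
  induction n using Nat.strong_induction_on with
  | _ n ih =>
    intro hn
    by_cases hprev : ∃ m < n, δ m ≠ 0
    · obtain ⟨j, hjn, hj, hlast⟩ := exists_last_lt hprev
      have hgap : ∀ m, j < m → m < n → δ m = 0 := fun m h1 h2 => not_not.mp (hlast m h1 h2)
      rw [hAC j n hjn hj hn hgap, ih j hjn hj, Ncount_of_zero_between hjn hgap, if_neg hn,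
        altDigit_succ]
    · push Not at hprev
      obtain hz | ⟨j, hj, hjmin⟩ := hF
      · exact absurd (hz n) hn
      · obtain rfl : j = n := by
          rcases lt_trichotomy j n with hjn | hjn | hjn
          · exact absurd (hprev j hjn) (hj ▸ one_ne_zero)
          · exact hjn
          · exact absurd (hjmin n hjn) hn
        rw [hj, Ncount_eq_one_of_first h0 hn hprev]
        simp [altDigit]

lemma walt_and_firstNonzero_iff {q : ℤ} (hp : 0 < p)
    (hθ : θ = 2 * Real.pi * (q : ℝ) / (p : ℝ)) :
    Walt θ p δ ∧ FirstNonzero δ 1 ↔ IsAltFromOne θ δ :=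
  ⟨fun h => h.1.isAltFromOne h.2, fun h => ⟨h.walt hp hθ, h.firstNonzero⟩⟩

lemma isAltFromOne_iff_tail (h0 : δ 0 = 0) (h1 : δ 1 = 0) :
    IsAltFromOne θ δ ↔ IsAltFromOne θ (fun n => δ (n + 1)) := by
  have hN : ∀ n, Ncount δ (n + 1) = Ncount (fun m => δ (m + 1)) n := fun n => by
    rw [Ncount_tail, if_pos h1, zero_add]
  constructor
  · rintro ⟨-, h⟩
    exact ⟨h1, fun n hn => (h (n + 1) hn).trans (by rw [hN])⟩
  · rintro ⟨-, h⟩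
    refine ⟨h0, fun n hn => ?_⟩
    cases n with
    | zero => exact absurd h0 hn
    | succ n => rw [hN]; exact h n hn

end IsAltFromOne

def prepend (a : ℂ) (δ : ℕ → ℂ) : ℕ → ℂ
  | 0 => a
  | n + 1 => δ n

lemma prepend_tail (δ : ℕ → ℂ) : prepend (δ 0) (fun n => δ (n + 1)) = δ := by
  funext n; cases n <;> rfl

noncomputable def flipTail (θ : ℝ) (δ : ℕ → ℂ) : ℕ → ℂ :=
  prepend 0 (fun n => rotConj θ (δ (n + 2)))

lemma flipTail_prepend_prepend {θ : ℝ} {δ : ℕ → ℂ} (h0 : δ 0 = 0) :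
    flipTail θ (prepend 0 (prepend 1 (fun n => rotConj θ (δ (n + 1))))) = δ := by
  rw [← prepend_tail δ, h0]
  simp only [flipTail, prepend, rotConj_rotConj]

lemma isAltFromOne_iff_flipTail {θ : ℝ} {δ : ℕ → ℂ} (h0 : δ 0 = 0) (h1 : δ 1 = 1) :
    IsAltFromOne θ δ ↔ IsAltFromOne θ (flipTail θ δ) := by
  have hN1 : Ncount δ 1 = 1 := by simp [Ncount_succ, Ncount_zero, h1]
  have hN : ∀ n, Ncount δ (n + 2) = Ncount (flipTail θ δ) (n + 1) + 1 := fun n => by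
    rw [Ncount_tail, if_neg (by simp [h1]), add_comm, Ncount_congr (δ' := flipTail θ δ)]
    rintro (_ | m) hm
    · exact absurd rfl hm
    · simp [flipTail, prepend, rotConj_eq_zero_iff]
  have hstep : ∀ m, (δ (m + 2) ≠ 0 → δ (m + 2) = altDigit θ (Ncount δ (m + 2))) ↔
      (flipTail θ δ (m + 1) ≠ 0 →
        flipTail θ δ (m + 1) = altDigit θ (Ncount (flipTail θ δ) (m + 1))) := fun m => by
    simp only [flipTail, prepend, hN, ne_eq, rotConj_eq_zero_iff, rotConj_eq_altDigit_iff]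
  constructor
  · rintro ⟨-, h⟩
    refine ⟨rfl, fun n hn => ?_⟩
    cases n with
    | zero => exact absurd rfl hn
    | succ m => exact (hstep m).mp (h (m + 2)) hn
  · rintro ⟨-, h⟩
    refine ⟨h0, fun n hn => ?_⟩
    match n, hn with
    | 0, hn => exact absurd h0 hn
    | 1, _ => rw [hN1, h1]; simp [altDigit]
    | m + 2, hn => exact (hstep m).mpr (h (m + 1)) hn

section Weights

variable {α : ℂ} {δ δ' : ℕ → ℂ}

lemma norm_xi (α : ℂ) (δ : ℕ → ℂ) (j : ℕ) : ‖xi α δ j‖ = ‖α‖ := by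
  induction j with
  | zero => rfl
  | succ j ih => rw [xi]; split_ifs <;> simp [ih]

lemma xi_succ (α : ℂ) (δ : ℕ → ℂ) (j : ℕ) :
    xi α δ (j + 1) = xi (xi α δ 1) (fun n => δ (n + 1)) j := by
  induction j with
  | zero => rfl
  | succ j ih => simp only [xi] at ih ⊢; rw [ih]

lemma xi_congr (h : ∀ n, δ n = 0 ↔ δ' n = 0) : xi α δ = xi α δ' := by
  funext j
  induction j with
  | zero => rfl
  | succ j ih => simp only [xi, h, ih]

lemma xi_conj (α : ℂ) (δ : ℕ → ℂ) (j : ℕ) : xi (conj α) δ j = conj (xi α δ j) := by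
  induction j with
  | zero => rfl
  | succ j ih => simp only [xi, ih]; split_ifs <;> rfl

lemma prod_Icc_one_succ {M : Type*} [CommMonoid M] (f : ℕ → M) (n : ℕ) :
    ∏ j ∈ Finset.Icc 1 (n + 1), f j = f 1 * ∏ j ∈ Finset.Icc 1 n, f (j + 1) := by
  induction n with
  | zero => simp
  | succ n ih => rw [Finset.prod_Icc_succ_top (by omega), ih, Finset.prod_Icc_succ_top (by omega),
      mul_assoc]

lemma digit_mul_prod_xi_succ (α : ℂ) (δ : ℕ → ℂ) (n : ℕ) :
    δ (n + 1) * ∏ j ∈ Finset.Icc 1 (n + 1), xi α δ j =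
      xi α δ 1 *
        (δ (n + 1) * ∏ j ∈ Finset.Icc 1 n, xi (xi α δ 1) (fun m => δ (m + 1)) j) := by
  rw [prod_Icc_one_succ, Finset.prod_congr rfl fun j _ => xi_succ α δ j]
  ring

end Weights

noncomputable def digitSum (α : ℂ) (δ : ℕ → ℂ) : ℂ :=
  ∑' n, δ n * ∏ j ∈ Finset.Icc 1 n, xi α δ j

section digitSum

variable {α : ℂ} {δ : ℕ → ℂ}

lemma summable_digit_mul_prod_xi {C : ℝ} (hα : ‖α‖ < 1) (hδ : ∀ n, ‖δ n‖ ≤ C) :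
    Summable fun n => δ n * ∏ j ∈ Finset.Icc 1 n, xi α δ j := by
  refine Summable.of_norm_bounded
    ((summable_geometric_of_lt_one (norm_nonneg α) hα).mul_left C) fun n => ?_
  rw [norm_mul, norm_prod]
  simp only [norm_xi, Finset.prod_const, Nat.card_Icc, add_tsub_cancel_right]
  exact mul_le_mul_of_nonneg_right (hδ n) (by positivity)

lemma digitSum_eq_add (hs : Summable fun n => δ n * ∏ j ∈ Finset.Icc 1 n, xi α δ j) :
    digitSum α δ = δ 0 + xi α δ 1 * digitSum (xi α δ 1) (fun n => δ (n + 1)) := by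
  rw [digitSum, hs.tsum_eq_zero_add, digitSum, ← tsum_mul_left]
  simp only [digit_mul_prod_xi_succ, Finset.Icc_eq_empty_of_lt zero_lt_one,
    Finset.prod_empty, mul_one]

lemma digitSum_eq_mul_tail (h0 : δ 0 = 0) :
    digitSum α δ = α * digitSum α (fun n => δ (n + 1)) := by
  have hxi1 : xi α δ 1 = α := if_pos h0
  rw [digitSum, ← Nat.succ_injective.tsum_eq, digitSum, ← tsum_mul_left]
  · simp only [Nat.succ_eq_add_one, digit_mul_prod_xi_succ, hxi1]
  · rintro (_ | n) hn
    · simp [h0] at hn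
    · exact ⟨n, rfl⟩

lemma digitSum_mul_conj {c : ℂ} (hc : c ≠ 0) (α : ℂ) (δ : ℕ → ℂ) :
    digitSum α (fun n => c * conj (δ n)) = c * conj (digitSum (conj α) δ) := by
  have hxi : xi α (fun n => c * conj (δ n)) = xi α δ := xi_congr fun n => by simp [hc]
  rw [digitSum, digitSum, hxi, Complex.conj_tsum, ← tsum_mul_left]
  simp only [map_mul, map_prod, xi_conj, conj_conj, mul_assoc]

lemma digitSum_eq_flipTail (θ : ℝ) (hα : ‖α‖ < 1) (h0 : δ 0 = 0) (h1 : δ 1 = 1)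
    (hδ : ∀ n, ‖δ n‖ ≤ 1) :
    digitSum α δ = α * rot θ * conj (digitSum α (flipTail θ δ)) + α := by
  have hxi : xi α (fun n => δ (n + 1)) 1 = conj α := by simp [xi, h1]
  have htail : digitSum α (fun n => δ (n + 1)) =
      1 + conj α * digitSum (conj α) (fun n => δ (n + 2)) := by
    rw [digitSum_eq_add (summable_digit_mul_prod_xi hα fun n => hδ (n + 1)), hxi, h1]
  have hflip : digitSum α (flipTail θ δ) = α * (rot θ * conj (digitSum (conj α)
      (fun n => δ (n + 2)))) := by
    rw [flipTail, digitSum_eq_mul_tail rfl]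
    exact congrArg (α * ·) (digitSum_mul_conj (rot_ne_zero θ) α _)
  have hrot : rot θ * conj (rot θ) = 1 := by rw [conj_rot, mul_inv_cancel₀ (rot_ne_zero θ)]
  rw [digitSum_eq_mul_tail h0, htail, hflip]
  simp only [map_mul, conj_conj]
  linear_combination (-α * conj α * digitSum (conj α) (fun n => δ (n + 2))) * hrot

end digitSum

section SetEquation

variable {α : ℂ} {θ : ℝ}

lemma X3one_eq_image {p : ℕ} {q : ℤ} (hp : 0 < p)
    (hθ : θ = 2 * Real.pi * (q : ℝ) / (p : ℝ)) :
    X3one α θ p = digitSum α '' {δ | IsAltFromOne θ δ} := by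
  ext x
  constructor
  · rintro ⟨δ, hW, hF, rfl⟩
    exact ⟨δ, (walt_and_firstNonzero_iff hp hθ).mp ⟨hW, hF⟩, rfl⟩
  · rintro ⟨δ, hδ, rfl⟩
    obtain ⟨hW, hF⟩ := (walt_and_firstNonzero_iff hp hθ).mpr hδ
    exact ⟨δ, hW, hF, rfl⟩

lemma setOf_isAltFromOne_eq_union :
    {δ | IsAltFromOne θ δ} =
      {δ | IsAltFromOne θ δ ∧ δ 1 = 0} ∪ {δ | IsAltFromOne θ δ ∧ δ 1 = 1} := by
  ext δ
  refine ⟨fun hδ => ?_, fun hδ => hδ.elim And.left And.left⟩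
  by_cases h1 : δ 1 = 0
  · exact Or.inl ⟨hδ, h1⟩
  · refine Or.inr ⟨hδ, hδ.eq_one_of_first h1 fun m hm => ?_⟩
    rw [Nat.lt_one_iff.mp hm]
    exact hδ.1

lemma image_mul_image_digitSum :
    (fun z => α * z) '' (digitSum α '' {δ | IsAltFromOne θ δ}) =
      digitSum α '' {δ | IsAltFromOne θ δ ∧ δ 1 = 0} := by
  rw [Set.image_image]
  ext x
  constructor
  · rintro ⟨δ, hδ, rfl⟩
    exact ⟨prepend 0 δ, ⟨(isAltFromOne_iff_tail rfl hδ.1).mpr hδ, hδ.1⟩,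
      digitSum_eq_mul_tail rfl⟩
  · rintro ⟨δ, ⟨hδ, h1⟩, rfl⟩
    exact ⟨_, (isAltFromOne_iff_tail hδ.1 h1).mp hδ, (digitSum_eq_mul_tail hδ.1).symm⟩

lemma image_psi₂_image_digitSum (hα : ‖α‖ < 1) :
    (fun z => α * rot θ * conj z + α) '' (digitSum α '' {δ | IsAltFromOne θ δ}) =
      digitSum α '' {δ | IsAltFromOne θ δ ∧ δ 1 = 1} := by
  rw [Set.image_image]
  ext x
  constructor
  · rintro ⟨δ', hδ', rfl⟩
    set δ := prepend 0 (prepend 1 (fun n => rotConj θ (δ' (n + 1))))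
    have hflip : flipTail θ δ = δ' := flipTail_prepend_prepend hδ'.1
    have hδ : IsAltFromOne θ δ := (isAltFromOne_iff_flipTail rfl rfl).mpr (hflip ▸ hδ')
    refine ⟨δ, ⟨hδ, rfl⟩, ?_⟩
    rw [digitSum_eq_flipTail θ hα rfl rfl hδ.norm_le_one, hflip]
  · rintro ⟨δ, ⟨hδ, h1⟩, rfl⟩
    exact ⟨_, (isAltFromOne_iff_flipTail hδ.1 h1).mp hδ,
      (digitSum_eq_flipTail θ hα hδ.1 h1 hδ.norm_le_one).symm⟩

end SetEquation

theorem X3one_set_equation_general (α : ℂ) (θ : ℝ) (p : ℕ) (q : ℤ) (hp : 0 < p)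
    (hθ : θ = 2 * Real.pi * (q : ℝ) / (p : ℝ)) (hα : ‖α‖ < 1) :
    X3one α θ p =
      (fun z => α * z) '' X3one α θ p ∪
      (fun z => α * rot θ * starRingEnd ℂ z + α) '' X3one α θ p := by
  rw [X3one_eq_image hp hθ, image_mul_image_digitSum, image_psi₂_image_digitSum hα,
    ← Set.image_union, ← setOf_isAltFromOne_eq_union]

/-- X³₁ = ψ₁(X³₁) ∪ ψ₂(X³₁) with ψ₁(z) = αz, ψ₂(z) = αe^{iθ}·conj z + α. -/
theorem X3one_set_equation (α : ℂ) (θ : ℝ) (p : ℕ) (q : ℤ) (hp : 0 < p)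
    (hθ : θ = 2 * Real.pi * (q : ℝ) / (p : ℝ)) (hα0 : 0 < ‖α‖) (hα : ‖α‖ < 1) :
    X3one α θ p =
      (fun z => α * z) '' X3one α θ p ∪
      (fun z => α * rot θ * starRingEnd ℂ z + α) '' X3one α θ p :=
  X3one_set_equation_general α θ p q hp hθ hα
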